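/- If S is a maximum independent set of G and A is a minimal dominating set of H of maximum size Γ(H), then S × A is a minimal dominating set of the lexicographic product G[H]; consequently Γ(G[H]) ≥ α(G)·Γ(H), where Γ denotes the upper domination number and α the independence number. -/

import Mathlib

open SimpleGraph Finset

/-- Open neighborhood of a set: vertices having a neighbor in `S`. -/
def nbhd {V : Type*} (G : SimpleGraph V) (S : Set V) : Set V := {v | ∃ u ∈ S, G.Adj u v}

/-- Closed neighborhood of a vertex. -/
def closedNbhd {V : Type*} (G : SimpleGraph V) (v : V) : Set V := insert v (G.neighborSet v)

/-- `S` dominates vertex `v`. -/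
def Dominates {V : Type*} (G : SimpleGraph V) (S : Set V) (v : V) : Prop :=
  v ∈ S ∨ ∃ u ∈ S, G.Adj u v

/-- `D` is a dominating set of `G`. -/
def IsDomSet {V : Type*} (G : SimpleGraph V) (D : Set V) : Prop := ∀ v, Dominates G D v

/-- `D` is a minimal dominating set of `G`. -/
def IsMinDomSet {V : Type*} (G : SimpleGraph V) (D : Set V) : Prop :=
  IsDomSet G D ∧ ∀ D' ⊂ D, ¬ IsDomSet G D'

/-- `D` is an irreducible dominating set of `G`. -/
def IsIrredDomSet {V : Type*} (G : SimpleGraph V) (D : Set V) : Prop :=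
  IsDomSet G D ∧ ¬ ∃ u ∈ D, IsDomSet G (D \ {u}) ∧ nbhd G D = nbhd G (D \ {u})

/-- Lexicographic product of two simple graphs. -/
def lexProd {V W : Type*} (G : SimpleGraph V) (H : SimpleGraph W) : SimpleGraph (V × W) where
  Adj p q := G.Adj p.1 q.1 ∨ (p.1 = q.1 ∧ H.Adj p.2 q.2)
  symm := ⟨by
    rintro p q (h | ⟨e, h⟩)
    · exact Or.inl h.symm
    · exact Or.inr ⟨e.symm, h.symm⟩⟩
  loopless := ⟨by
    rintro p (h | ⟨_, h⟩)
    · exact G.loopless.irrefl _ h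
    · exact H.loopless.irrefl _ h⟩

/-- Projection of `D ⊆ V(G) × V(H)` to `G`. -/
def projG {V W : Type*} (D : Set (V × W)) : Set V := {x | ∃ y, (x, y) ∈ D}

/-- Fiber of `D ⊆ V(G) × V(H)` over `x ∈ V(G)`. -/
def projH {V W : Type*} (D : Set (V × W)) (x : V) : Set W := {y | (x, y) ∈ D}

/-- A set of pairwise nonadjacent vertices. -/
def IsIndep {V : Type*} (G : SimpleGraph V) (S : Set V) : Prop :=
  S.Pairwise (fun a b => ¬ G.Adj a b)

/-- The independence number. -/
noncomputable def indepNum' {V : Type*} [Fintype V] (G : SimpleGraph V) : ℕ :=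
  sSup {n | ∃ S : Finset V, IsIndep G ↑S ∧ S.card = n}

/-- The upper domination number: maximum size of a minimal dominating set. -/
noncomputable def upperDomNum {V : Type*} [Fintype V] (G : SimpleGraph V) : ℕ :=
  sSup {n | ∃ D : Finset V, IsMinDomSet G ↑D ∧ D.card = n}


/-! A maximum independent set `S` of `G` is maximal, hence dominating, so `S × A` dominates
`G[H]` whenever `A` dominates `H`. It is minimal: if a proper subset `D'` still dominated,
pick `(x, a) ∈ S × A \ D'`. Since `S` is independent, a vertex `(x, w)` can only be dominated
by a vertex of `D'` in the same fiber `{x} × V(H)`, so the fiber of `D'` over `x` would be a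
dominating set of `H` strictly inside `A`. Counting `|S × A| = α(G) Γ(H)` gives the bound. -/

section Bounds

variable {V : Type*} [Fintype V] {G : SimpleGraph V}

theorem card_le_indepNum' {S : Finset V} (hS : IsIndep G ↑S) : S.card ≤ indepNum' G :=
  le_csSup ⟨Fintype.card V, by rintro n ⟨T, -, rfl⟩; exact T.card_le_univ⟩ ⟨S, hS, rfl⟩

theorem card_le_upperDomNum {D : Finset V} (hD : IsMinDomSet G ↑D) :
    D.card ≤ upperDomNum G :=
  le_csSup ⟨Fintype.card V, by rintro n ⟨T, -, rfl⟩; exact T.card_le_univ⟩ ⟨D, hD, rfl⟩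

theorem maximal_isIndep_of_card_eq_indepNum' {S : Finset V} (hS : IsIndep G ↑S)
    (hcard : S.card = indepNum' G) : Maximal (IsIndep G) ↑S := by
  refine ⟨hS, fun T hT hST => ?_⟩
  obtain ⟨U, rfl⟩ := (Set.toFinite T).exists_finset_coe
  have hSU : S ⊆ U := Finset.coe_subset.mp hST
  rw [Finset.eq_of_subset_of_card_le hSU (hcard ▸ card_le_indepNum' hT)]

end Bounds

theorem isDomSet_of_maximal_isIndep {V : Type*} {G : SimpleGraph V} {S : Set V}
    (hS : Maximal (IsIndep G) S) : IsDomSet G S := by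
  intro x
  by_contra hx
  simp only [Dominates, not_or, not_exists, not_and] at hx
  obtain ⟨hxS, hxAdj⟩ := hx
  have hindep : IsIndep G (insert x S) :=
    hS.1.insert_of_notMem hxS fun b hb => ⟨fun h => hxAdj b hb h.symm, hxAdj b hb⟩
  exact hxS (hS.2 hindep (Set.subset_insert x S) (Set.mem_insert x S))

section LexProd

variable {V W : Type*} {G : SimpleGraph V} {H : SimpleGraph W}

theorem isDomSet_lexProd_prod {S : Set V} {A : Set W} (hS : IsDomSet G S)
    (hA : IsDomSet H A) : IsDomSet (lexProd G H) (S ×ˢ A) := by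
  rintro ⟨x, y⟩
  rcases hS x with hx | ⟨s, hs, hsx⟩
  · rcases hA y with hy | ⟨u, hu, huy⟩
    · exact Or.inl ⟨hx, hy⟩
    · exact Or.inr ⟨(x, u), ⟨hx, hu⟩, Or.inr ⟨rfl, huy⟩⟩
  · obtain ⟨a, ha⟩ : A.Nonempty := by
      rcases hA y with hy | ⟨u, hu, -⟩
      exacts [⟨y, hy⟩, ⟨u, hu⟩]
    exact Or.inr ⟨(s, a), ⟨hs, ha⟩, Or.inl hsx⟩

theorem isDomSet_projH {S : Set V} (hS : IsIndep G S) {D : Set (V × W)}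
    (hD : IsDomSet (lexProd G H) D) (hDS : D ⊆ S ×ˢ Set.univ) {x : V} (hx : x ∈ S) :
    IsDomSet H (projH D x) := by
  intro w
  rcases hD (x, w) with hw | ⟨⟨u, v⟩, huv, hG | ⟨rfl, hH⟩⟩
  · exact Or.inl hw
  · have hu : u ∈ S := (hDS huv).1
    obtain rfl | hne := eq_or_ne u x
    · exact absurd hG (G.loopless.irrefl u)
    · exact absurd hG (hS hu hx hne)
  · exact Or.inr ⟨v, huv, hH⟩

theorem isMinDomSet_lexProd_prod {S : Set V} {A : Set W} (hSind : IsIndep G S)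
    (hSdom : IsDomSet G S) (hA : IsMinDomSet H A) :
    IsMinDomSet (lexProd G H) (S ×ˢ A) := by
  refine ⟨isDomSet_lexProd_prod hSdom hA.1, fun D hD hDdom => ?_⟩
  obtain ⟨⟨x, a⟩, ⟨hx, ha⟩, haD⟩ := Set.exists_of_ssubset hD
  have hfiber : projH D x ⊂ A :=
    ⟨fun v hv => (hD.1 hv).2, fun hAD => haD (hAD ha)⟩
  exact hA.2 _ hfiber
    (isDomSet_projH hSind hDdom (hD.1.trans (Set.prod_mono le_rfl (Set.subset_univ A))) hx)

end LexProd

theorem stmt14_general {V W : Type*} [Fintype V] [Fintype W]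
    (G : SimpleGraph V) (H : SimpleGraph W)
    (S : Finset V) (hSind : IsIndep G ↑S) (hScard : S.card = indepNum' G)
    (A : Finset W) (hAmin : IsMinDomSet H ↑A) (hAcard : A.card = upperDomNum H) :
    IsMinDomSet (lexProd G H) ↑(S ×ˢ A) ∧
      indepNum' G * upperDomNum H ≤ upperDomNum (lexProd G H) := by
  have hSdom : IsDomSet G ↑S :=
    isDomSet_of_maximal_isIndep (maximal_isIndep_of_card_eq_indepNum' hSind hScard)
  have hmin : IsMinDomSet (lexProd G H) ↑(S ×ˢ A) := by
    rw [Finset.coe_product]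
    exact isMinDomSet_lexProd_prod hSind hSdom hAmin
  refine ⟨hmin, ?_⟩
  calc indepNum' G * upperDomNum H = (S ×ˢ A).card := by rw [card_product, hScard, hAcard]
    _ ≤ upperDomNum (lexProd G H) := card_le_upperDomNum hmin

theorem stmt14 {V W : Type*} [Fintype V] [Fintype W] [Nonempty V] [Nonempty W]
    (G : SimpleGraph V) (H : SimpleGraph W)
    (S : Finset V) (hSind : IsIndep G ↑S) (hScard : S.card = indepNum' G)
    (A : Finset W) (hAmin : IsMinDomSet H ↑A) (hAcard : A.card = upperDomNum H) :
    IsMinDomSet (lexProd G H) ↑(S ×ˢ A) ∧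
      indepNum' G * upperDomNum H ≤ upperDomNum (lexProd G H) :=
  stmt14_general G H S hSind hScard A hAmin hAcard
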